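/- arXiv:2404.04102 — 5 statements merged into one kernel-verified Lean document; each statement's English description precedes it below -/
import Mathlib

section
/- If ℓ is a loss function satisfying the symmetry condition ℓ(θ, z, 0) + ℓ(θ, z, 1) = 1 for all parameters θ and samples z, then for a label-flip noise model with noise rate η₀ < 1/2, the noisy expected risk equals (1-2η₀) times the clean expected risk plus η₀; in particular the sets of minimizers of the clean and noisy risks coincide. -/
open MeasureTheory

/-- A loss satisfying the symmetry condition `ℓ(θ,z,0) + ℓ(θ,z,1) = 1` is
noise-tolerant under label-flip noise with rate `η₀ < 1/2`: the noisy expected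
risk equals `(1 - 2η₀)` times the clean risk plus `η₀`, and the minimizer sets
of the clean and noisy risks coincide. -/
theorem symmetric_loss_noise_tolerant {Θ Z : Type*} [MeasurableSpace Z]
    (μ : Measure (Z × Bool)) [IsProbabilityMeasure μ]
    (ℓ : Θ → Z → Bool → ℝ) (η₀ : ℝ) (hη₀ : 0 ≤ η₀) (hη : η₀ < 1 / 2)
    (hsym : ∀ θ z, ℓ θ z false + ℓ θ z true = 1)
    (hint : ∀ θ, Integrable (fun p => ℓ θ p.1 p.2) μ)
    (hint' : ∀ θ, Integrable (fun p => ℓ θ p.1 (!p.2)) μ)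
    (L Lη : Θ → ℝ)
    (hL : ∀ θ, L θ = ∫ p, ℓ θ p.1 p.2 ∂μ)
    (hLη : ∀ θ, Lη θ = ∫ p, ((1 - η₀) * ℓ θ p.1 p.2 + η₀ * ℓ θ p.1 (!p.2)) ∂μ) :
    (∀ θ, Lη θ = (1 - 2 * η₀) * L θ + η₀) ∧
      {θ | ∀ θ', L θ ≤ L θ'} = {θ | ∀ θ', Lη θ ≤ Lη θ'} := by
  have key : ∀ θ, Lη θ = (1 - 2 * η₀) * L θ + η₀ := by
    intro θ
    have hflip : ∀ p : Z × Bool, ℓ θ p.1 (!p.2) = 1 - ℓ θ p.1 p.2 := by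
      intro ⟨z, c⟩
      have := hsym θ z
      cases c <;> simp <;> linarith
    have heq : (fun p : Z × Bool => (1 - η₀) * ℓ θ p.1 p.2 + η₀ * ℓ θ p.1 (!p.2))
        = fun p => (1 - 2 * η₀) * ℓ θ p.1 p.2 + η₀ := by
      funext p; rw [hflip p]; ring
    rw [hLη, heq, hL]
    rw [integral_add ((hint θ).const_mul _) (integrable_const _),
      integral_const_mul, integral_const]
    simp
  refine ⟨key, ?_⟩
  ext θ
  simp only [Set.mem_setOf_eq, key]
  constructor
  · intro h θ'
    have := h θ'
    nlinarith [this]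
  · intro h θ'
    have := h θ'
    nlinarith [this]
end

section
/- Fix β > 0 and η₀ ∈ (0, 1/2). For the DPO loss under label-flip noise on a point mass distribution, the noisy risk as a function of the margin Δ is g(Δ) = -(1-η₀)log σ(Δ) - η₀ log σ(-Δ), whose unique minimizer is Δ* = log((1-η₀)/η₀). If M = sup over the parameter space of Δ(θ) satisfies M > log((1-η₀)/η₀), i.e. η₀ ≥ 1/(1+e^M), then the noisy-risk minimizer differs from the clean-risk minimizer (which maximizes Δ). Hence the DPO loss is not noise-tolerant. -/
/-!
The noisy risk is the binary cross-entropy of the label distribution `(1 - η₀, η₀)` against the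
model distribution `(σ t, 1 - σ t)`. By Gibbs' inequality (strict concavity of `log`) it is
minimized exactly when `σ t = 1 - η₀`, that is at `t = log ((1 - η₀) / η₀)`. The clean risk
prefers the largest margin `M`, which lies strictly beyond that point; equivalently
`1 / (1 + exp M) = σ (-M) < σ (-log ((1 - η₀) / η₀)) = η₀`.
-/

open Real

lemma Real.sigmoid_eq_exp_div (x : ℝ) : sigmoid x = exp x / (1 + exp x) := by
  rw [sigmoid_def, exp_neg]
  field_simp
  ring

lemma Real.sigmoid_neg_eq_inv_one_add_exp (x : ℝ) : sigmoid (-x) = (1 + exp x)⁻¹ := by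
  rw [sigmoid_def, neg_neg]

lemma Real.sigmoid_log_one_sub_div {η : ℝ} (hη₀ : 0 < η) (hη₁ : η < 1) :
    sigmoid (log ((1 - η) / η)) = 1 - η := by
  have : 0 < 1 - η := by linarith
  rw [sigmoid_eq_exp_div, exp_log (by positivity)]
  field_simp
  ring

lemma Real.mul_log_add_mul_log_lt_of_ne {p q : ℝ} (hp₀ : 0 < p) (hp₁ : p < 1)
    (hq₀ : 0 < q) (hq₁ : q < 1) (hqp : q ≠ p) :
    p * log q + (1 - p) * log (1 - q) < p * log p + (1 - p) * log (1 - p) := by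
  have hp' : 0 < 1 - p := by linarith
  have hq' : 0 < 1 - q := by linarith
  have hne : q / p ≠ (1 - q) / (1 - p) := by
    intro h
    rw [div_eq_div_iff hp₀.ne' hp'.ne'] at h
    exact hqp (by linarith)
  have hjensen := strictConcaveOn_log_Ioi.2 (Set.mem_Ioi.2 (div_pos hq₀ hp₀))
    (Set.mem_Ioi.2 (div_pos hq' hp')) hne hp₀ hp' (by ring)
  have hmix : p * (q / p) + (1 - p) * ((1 - q) / (1 - p)) = 1 := by
    field_simp
    ring
  simp only [smul_eq_mul, hmix, log_one] at hjensen
  rw [log_div hq₀.ne' hp₀.ne', log_div hq'.ne' hp'.ne'] at hjensen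
  linarith

theorem Real.noisy_sigmoid_risk_lt_of_ne {η t : ℝ} (hη₀ : 0 < η) (hη₁ : η < 1)
    (ht : t ≠ log ((1 - η) / η)) :
    -(1 - η) * log (sigmoid (log ((1 - η) / η))) - η * log (sigmoid (-log ((1 - η) / η))) <
      -(1 - η) * log (sigmoid t) - η * log (sigmoid (-t)) := by
  have hne : sigmoid t ≠ 1 - η := by
    rw [← sigmoid_log_one_sub_div hη₀ hη₁]
    exact sigmoid_injective.ne ht
  have := mul_log_add_mul_log_lt_of_ne (p := 1 - η) (by linarith) (by linarith)
    (sigmoid_pos t) (sigmoid_lt_one t) hne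
  simp only [sigmoid_neg, sigmoid_log_one_sub_div hη₀ hη₁, sub_sub_cancel] at this ⊢
  linarith

lemma Real.one_div_one_add_exp_lt_of_log_one_sub_div_lt {η M : ℝ} (hη₀ : 0 < η) (hη₁ : η < 1)
    (hM : log ((1 - η) / η) < M) : 1 / (1 + exp M) < η := by
  have h := sigmoid_lt (neg_lt_neg hM)
  rwa [sigmoid_neg_eq_inv_one_add_exp, sigmoid_neg, sigmoid_log_one_sub_div hη₀ hη₁,
    sub_sub_cancel, ← one_div] at h

theorem dpo_not_noise_tolerant_general (σ : ℝ → ℝ)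
    (hσ : ∀ x, σ x = Real.exp x / (1 + Real.exp x))
    (η₀ : ℝ) (hη : η₀ ∈ Set.Ioo (0 : ℝ) (1 / 2))
    (g : ℝ → ℝ)
    (hg : ∀ t, g t = -(1 - η₀) * Real.log (σ t) - η₀ * Real.log (σ (-t)))
    {Θ : Type*}
    (Δ : Θ → ℝ) (M : ℝ)
    (hgt : Real.log ((1 - η₀) / η₀) < M) :
    (∀ t, t ≠ Real.log ((1 - η₀) / η₀) →
      g (Real.log ((1 - η₀) / η₀)) < g t) ∧
    (1 / (1 + Real.exp M) < η₀) ∧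
    ∀ θstar θeta : Θ, Δ θstar = M → Δ θeta = Real.log ((1 - η₀) / η₀) →
      θstar ≠ θeta := by
  obtain ⟨hη₀, hη_half⟩ := hη
  have hη₁ : η₀ < 1 := by linarith
  obtain rfl : σ = sigmoid := funext fun x ↦ (hσ x).trans (sigmoid_eq_exp_div x).symm
  refine ⟨fun t ht ↦ ?_, one_div_one_add_exp_lt_of_log_one_sub_div_lt hη₀ hη₁ hgt, ?_⟩
  · simpa only [hg] using noisy_sigmoid_risk_lt_of_ne hη₀ hη₁ ht
  · rintro θstar θeta hstar heta rfl
    exact hgt.ne (heta.symm.trans hstar)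

/-- DPO is not noise-tolerant: with `η₀ ∈ (0,1/2)`, the noisy risk
`g(Δ) = -(1-η₀) log σ(Δ) - η₀ log σ(-Δ)` has unique minimizer
`Δ* = log((1-η₀)/η₀)`; if the maximum `M` of the margin `Δ` over the compact
parameter space satisfies `M > log((1-η₀)/η₀)` (i.e. `η₀ > 1/(1+e^M)`), then
any noisy-risk minimizer (attaining `Δ*`) differs from any clean-risk
minimizer (which maximizes `Δ`). -/
theorem dpo_not_noise_tolerant (σ : ℝ → ℝ)
    (hσ : ∀ x, σ x = Real.exp x / (1 + Real.exp x))
    (β : ℝ) (hβ : 0 < β) (η₀ : ℝ) (hη : η₀ ∈ Set.Ioo (0 : ℝ) (1 / 2))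
    (g : ℝ → ℝ)
    (hg : ∀ t, g t = -(1 - η₀) * Real.log (σ t) - η₀ * Real.log (σ (-t)))
    {Θ : Type*} [TopologicalSpace Θ] [CompactSpace Θ]
    (Δ : Θ → ℝ) (hΔ : Continuous Δ) (M : ℝ) (hM : 0 < M)
    (hMub : ∀ θ, Δ θ ≤ M) (hMatt : ∃ θ, Δ θ = M)
    (hgt : Real.log ((1 - η₀) / η₀) < M) :
    (∀ t, t ≠ Real.log ((1 - η₀) / η₀) →
      g (Real.log ((1 - η₀) / η₀)) < g t) ∧
    (1 / (1 + Real.exp M) < η₀) ∧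
    ∀ θstar θeta : Θ, Δ θstar = M → Δ θeta = Real.log ((1 - η₀) / η₀) →
      θstar ≠ θeta :=
  dpo_not_noise_tolerant_general σ hσ η₀ hη g hg Δ M hgt
end

section
/- Fix β > 0 and η₀ ∈ (0, 1/2). Let h(Δ) = (1-η₀)(Δ - 1/(2β))² + η₀(-Δ - 1/(2β))². Then h(Δ) = Δ² + ((2η₀-1)/β)Δ + 1/(4β²), and its unique minimizer is Δ* = (1-2η₀)/(2β), which differs from the noise-free minimizer 1/(2β) whenever η₀ > 0. Hence the IPO loss is not noise-tolerant. -/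
/-- IPO is not noise-tolerant: for `β > 0` and `η₀ ∈ (0,1/2)`, the noisy risk
`h(Δ) = (1-η₀)(Δ - 1/(2β))² + η₀(-Δ - 1/(2β))²` equals
`Δ² + ((2η₀-1)/β)Δ + 1/(4β²)`, has unique minimizer `Δ* = (1-2η₀)/(2β)`, and
`Δ* ≠ 1/(2β)` (the clean minimizer) since `η₀ > 0`. -/
theorem ipo_not_noise_tolerant (β η₀ : ℝ) (hβ : 0 < β)
    (hη : η₀ ∈ Set.Ioo (0 : ℝ) (1 / 2))
    (h : ℝ → ℝ)
    (hh : ∀ Δ, h Δ = (1 - η₀) * (Δ - 1 / (2 * β)) ^ 2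
      + η₀ * (-Δ - 1 / (2 * β)) ^ 2) :
    (∀ Δ, h Δ = Δ ^ 2 + ((2 * η₀ - 1) / β) * Δ + 1 / (4 * β ^ 2)) ∧
    (∀ Δ, Δ ≠ (1 - 2 * η₀) / (2 * β) → h ((1 - 2 * η₀) / (2 * β)) < h Δ) ∧
    (1 - 2 * η₀) / (2 * β) ≠ 1 / (2 * β) := by
  obtain ⟨hη0, hη1⟩ := hη
  have hβ' : β ≠ 0 := ne_of_gt hβ
  have hexp : ∀ Δ, h Δ = Δ ^ 2 + ((2 * η₀ - 1) / β) * Δ + 1 / (4 * β ^ 2) := by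
    intro Δ; rw [hh]; field_simp; ring
  refine ⟨hexp, ?_, ?_⟩
  · intro Δ hΔ
    rw [hexp, hexp]
    have key : h ((1 - 2 * η₀) / (2 * β)) + (Δ - (1 - 2 * η₀) / (2 * β)) ^ 2
        = Δ ^ 2 + ((2 * η₀ - 1) / β) * Δ + 1 / (4 * β ^ 2) := by
      rw [hexp]; field_simp; ring
    have hsq : 0 < (Δ - (1 - 2 * η₀) / (2 * β)) ^ 2 :=
      pow_pos (abs_pos.mpr (sub_ne_zero.mpr hΔ)) 2 |>.trans_le (by rw [sq_abs])
    nlinarith [hexp ((1 - 2 * η₀) / (2 * β))]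
  · intro hc
    rw [div_eq_div_iff (by positivity) (by positivity)] at hc
    nlinarith
end

section
/- For ε, η₀ ∈ (0, 1/2), the equality ε/(1-ε) = (η₀ + ε - 2εη₀)/(1 - η₀ - ε + 2εη₀) holds if and only if ε = 1/2 or η₀ = 0. Hence for ε ∈ (0,1/2) and η₀ ∈ (0,1/2) the minimizer of the label-smoothed DPO noisy risk differs from that of the clean risk, i.e., C-DPO is not noise-tolerant. -/
/-- For `ε, η₀ ∈ (0,1/2)`: `ε/(1-ε) = (η₀+ε-2εη₀)/(1-η₀-ε+2εη₀)` iff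
`ε = 1/2` or `η₀ = 0`; hence the minimizer `log(ε/(1-ε))` of the clean
label-smoothed DPO risk differs from the minimizer
`log((η₀+ε-2εη₀)/(1-η₀-ε+2εη₀))` of the noisy risk, i.e. C-DPO is not
noise-tolerant. -/
theorem cdpo_not_noise_tolerant (ε η₀ : ℝ)
    (hε : ε ∈ Set.Ioo (0 : ℝ) (1 / 2)) (hη : η₀ ∈ Set.Ioo (0 : ℝ) (1 / 2)) :
    (ε / (1 - ε) = (η₀ + ε - 2 * ε * η₀) / (1 - η₀ - ε + 2 * ε * η₀) ↔
      ε = 1 / 2 ∨ η₀ = 0) ∧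
    Real.log (ε / (1 - ε)) ≠
      Real.log ((η₀ + ε - 2 * ε * η₀) / (1 - η₀ - ε + 2 * ε * η₀)) := by
  obtain ⟨hε0, hε1⟩ := hε
  obtain ⟨hη0, hη1⟩ := hη
  have h1ε : (0:ℝ) < 1 - ε := by linarith
  have hN : (0:ℝ) < η₀ + ε - 2 * ε * η₀ := by nlinarith
  have hD : (0:ℝ) < 1 - η₀ - ε + 2 * ε * η₀ := by nlinarith
  have hiff : ε / (1 - ε) = (η₀ + ε - 2 * ε * η₀) / (1 - η₀ - ε + 2 * ε * η₀) ↔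
      ε = 1 / 2 ∨ η₀ = 0 := by
    rw [div_eq_div_iff h1ε.ne' hD.ne']
    constructor
    · intro h
      right
      nlinarith
    · rintro (h | h)
      · linarith
      · rw [h]; ring
  refine ⟨hiff, fun h => ?_⟩
  have := Real.log_injOn_pos (Set.mem_Ioi.mpr (div_pos hε0 h1ε))
    (Set.mem_Ioi.mpr (div_pos hN hD)) h
  rcases hiff.mp this with h' | h' <;> linarith
end

section
/- For ε, η₀ ∈ (0, 1/2) and β > 0, the noisy-risk minimizer -(1-2ε)(1-2η₀)/(2β) of the label-smoothed IPO loss equals the clean-risk minimizer (2ε-1)/(2β) if and only if η₀ = 0 or ε = 1/2. Hence C-IPO is not noise-tolerant for ε ∈ (0,1/2) and η₀ ∈ (0,1/2). -/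
/-- For `ε, η₀ ∈ (0,1/2)` and `β > 0`, the noisy-risk minimizer
`-(1-2ε)(1-2η₀)/(2β)` of the label-smoothed IPO loss equals the clean-risk
minimizer `(2ε-1)/(2β)` iff `η₀ = 0` or `ε = 1/2`; hence they differ
(C-IPO is not noise-tolerant). -/
theorem cipo_not_noise_tolerant (β ε η₀ : ℝ) (hβ : 0 < β)
    (hε : ε ∈ Set.Ioo (0 : ℝ) (1 / 2)) (hη : η₀ ∈ Set.Ioo (0 : ℝ) (1 / 2)) :
    (-((1 - 2 * ε) * (1 - 2 * η₀)) / (2 * β) = (2 * ε - 1) / (2 * β) ↔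
      η₀ = 0 ∨ ε = 1 / 2) ∧
    -((1 - 2 * ε) * (1 - 2 * η₀)) / (2 * β) ≠ (2 * ε - 1) / (2 * β) := by
  obtain ⟨hε1, hε2⟩ := hε
  obtain ⟨hη1, hη2⟩ := hη
  have h2β : (2 * β) ≠ 0 := by positivity
  have key : -((1 - 2 * ε) * (1 - 2 * η₀)) / (2 * β) = (2 * ε - 1) / (2 * β) ↔
      η₀ = 0 ∨ ε = 1 / 2 := by
    rw [div_eq_div_iff (by positivity) (by positivity)]
    constructor
    · intro h
      have : (1 - 2 * ε) * η₀ = 0 := by nlinarith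
      rcases mul_eq_zero.mp this with h' | h'
      · right; linarith
      · left; exact h'
    · rintro (h | h) <;> subst h <;> ring
  refine ⟨key, fun h => ?_⟩
  rcases key.mp h with h' | h' <;> linarith
end
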